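/- Fix integers α_1 > α_2 > ⋯ > α_N ≥ 1 and m_1, …, m_N ≥ 1, set n := Σ_r α_r m_r, F := ⊕_{r=1}^N E_{α_r}(I_{m_r}), and let 𝕏 := {X ∈ GL_n(ℂ) : X has form (0T0) and F Xᵀ F X = I_n}. Let 𝕆 := {⊕_{r=1}^N (Q_r ⊕ Q_r ⊕ ⋯ ⊕ Q_r) (α_r copies of Q_r) : Q_r ∈ O_{m_r}(ℂ)} and 𝕍 := {X ∈ 𝕏 : for each r, the leading Toeplitz coefficient A^{rr}_0 of the (r,r) diagonal block of X equals I_{m_r}}. Then: (i) 𝕆 and 𝕍 are subgroups of 𝕏; (ii) 𝕍 is a normal subgroup of 𝕏; (iii) 𝕆 ∩ 𝕍 = {I_n}; (iv) every X ∈ 𝕏 factors uniquely as X = Q·V with Q ∈ 𝕆 and V ∈ 𝕍. Hence 𝕏 is a semidirect product 𝕆 ⋉ 𝕍. -/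

import Mathlib

open Matrix

noncomputable section

/-- Form (0T0): block matrix partitioned by Jordan structure `(α, m)` whose `(r,s)` block,
viewed as an `α r × α s` array of `m r × m s` blocks, is a rectangular block
upper-triangular Toeplitz matrix aligned to the top-right corner. -/
def IsForm0T0 {N : ℕ} (α m : Fin N → ℕ)
    (X : Matrix (Σ r : Fin N, Fin (α r) × Fin (m r)) (Σ r : Fin N, Fin (α r) × Fin (m r)) ℂ) :
    Prop :=
  ∃ A : ∀ r s : Fin N, ℕ → Matrix (Fin (m r)) (Fin (m s)) ℂ,
    ∀ (r s : Fin N) (i : Fin (α r)) (j : Fin (α s)) (a : Fin (m r)) (b : Fin (m s)),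
      X ⟨r, (i, a)⟩ ⟨s, (j, b)⟩ =
        if (i : ℕ) + (α s - min (α r) (α s)) ≤ (j : ℕ) then
          A r s ((j : ℕ) - (i : ℕ) - (α s - min (α r) (α s))) a b
        else 0

/-- `E_b(I_m)`: the `bm × bm` block matrix with `I_m` on the block anti-diagonal. -/
def revE (b m : ℕ) : Matrix (Fin b × Fin m) (Fin b × Fin m) ℂ :=
  Matrix.of fun p q => if (p.1 : ℕ) + (q.1 : ℕ) + 1 = b ∧ p.2 = q.2 then 1 else 0

/-- `F = ⊕_r E_{α r}(I_{m r})`. -/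
def bigF {N : ℕ} (α m : Fin N → ℕ) :
    Matrix (Σ r : Fin N, Fin (α r) × Fin (m r)) (Σ r : Fin N, Fin (α r) × Fin (m r)) ℂ :=
  Matrix.blockDiagonal' fun r => revE (α r) (m r)

/-- The `n × n` upper-triangular Jordan block `J_n(λ)`. -/
def Jmat (n : ℕ) (lam : ℂ) : Matrix (Fin n) (Fin n) ℂ :=
  Matrix.of fun i j => if (j : ℕ) = (i : ℕ) then lam else if (j : ℕ) = (i : ℕ) + 1 then 1 else 0

/-- The `n × n` backward identity matrix `E_n`. -/
def ErevC (n : ℕ) : Matrix (Fin n) (Fin n) ℂ :=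
  Matrix.of fun i j => if (i : ℕ) + (j : ℕ) + 1 = n then 1 else 0

/-- `P_n = (1/√2)(I + i E_n)`. -/
noncomputable def Pmat (n : ℕ) : Matrix (Fin n) (Fin n) ℂ :=
  (Real.sqrt 2 : ℂ)⁻¹ • (1 + Complex.I • ErevC n)

/-- `P_n⁻¹ = (1/√2)(I − i E_n)`. -/
noncomputable def PmatInv (n : ℕ) : Matrix (Fin n) (Fin n) ℂ :=
  (Real.sqrt 2 : ℂ)⁻¹ • (1 - Complex.I • ErevC n)

/-- The symmetric canonical form `K_n(λ) = P_n J_n(λ) P_n⁻¹` of a Jordan block. -/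
noncomputable def Kmat (n : ℕ) (lam : ℂ) : Matrix (Fin n) (Fin n) ℂ :=
  Pmat n * Jmat n lam * PmatInv n

/-- `T(A_0, …)`: the `β × β` block upper-triangular Toeplitz matrix with blocks `A_j`. -/
def blkToeplitz (β p q : ℕ) (A : ℕ → Matrix (Fin p) (Fin q) ℂ) :
    Matrix (Fin β × Fin p) (Fin β × Fin q) ℂ :=
  Matrix.of fun x y =>
    if (x.1 : ℕ) ≤ (y.1 : ℕ) then A ((y.1 : ℕ) - (x.1 : ℕ)) x.2 y.2 else 0

/-- The `(i,i)`-th `m r × m r` entry-block of the `(r,r)` diagonal block of `X`; for a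
matrix of form (0T0) this is the leading Toeplitz coefficient `A^{rr}_0`. -/
def diagLead {N : ℕ} (α m : Fin N → ℕ)
    (X : Matrix (Σ r : Fin N, Fin (α r) × Fin (m r)) (Σ r : Fin N, Fin (α r) × Fin (m r)) ℂ)
    (r : Fin N) (i : Fin (α r)) : Matrix (Fin (m r)) (Fin (m r)) ℂ :=
  Matrix.of fun a b => X ⟨r, (i, a)⟩ ⟨r, (i, b)⟩

/-- The space of skew-symmetric matrices commuting with `S`. -/
def skewCommSubmodule (ι : Type*) [Fintype ι] [DecidableEq ι] (S : Matrix ι ι ℂ) :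
    Submodule ℂ (Matrix ι ι ℂ) where
  carrier := {X | Xᵀ = -X ∧ X * S = S * X}
  add_mem' := by
    rintro a b ⟨ha1, ha2⟩ ⟨hb1, hb2⟩
    refine ⟨?_, ?_⟩
    · rw [Matrix.transpose_add, ha1, hb1, neg_add]
    · rw [add_mul, mul_add, ha2, hb2]
  zero_mem' := by
    refine ⟨?_, ?_⟩
    · simp
    · simp
  smul_mem' := by
    rintro c a ⟨h1, h2⟩
    refine ⟨?_, ?_⟩
    · rw [Matrix.transpose_smul, h1, smul_neg]
    · rw [Matrix.smul_mul, Matrix.mul_smul, h2]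

/-- The isotropy group (as a set) of `S` under orthogonal similarity. -/
def sigmaSet {ι : Type*} [Fintype ι] [DecidableEq ι] (S : Matrix ι ι ℂ) : Set (Matrix ι ι ℂ) :=
  {Q | Qᵀ * Q = 1 ∧ Qᵀ * S * Q = S}

variable {N : ℕ}

/-- Membership in `𝕏`: invertible, of form (0T0), and `F Xᵀ F X = 1`. -/
def inXset (α m : Fin N → ℕ)
    (X : Matrix (Σ r : Fin N, Fin (α r) × Fin (m r)) (Σ r : Fin N, Fin (α r) × Fin (m r)) ℂ) :
    Prop :=
  IsUnit X ∧ IsForm0T0 α m X ∧ bigF α m * Xᵀ * bigF α m * X = 1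

/-- Membership in `𝕆`: `X = ⊕_r (Q_r ⊕ ⋯ ⊕ Q_r)` (`α_r` copies) with `Q_r` orthogonal. -/
def inOset (α m : Fin N → ℕ)
    (X : Matrix (Σ r : Fin N, Fin (α r) × Fin (m r)) (Σ r : Fin N, Fin (α r) × Fin (m r)) ℂ) :
    Prop :=
  ∃ Q : ∀ r, Matrix (Fin (m r)) (Fin (m r)) ℂ,
    (∀ r, (Q r)ᵀ * Q r = 1) ∧
      X = Matrix.blockDiagonal' fun r =>
        Matrix.of fun p q : Fin (α r) × Fin (m r) => if p.1 = q.1 then Q r p.2 q.2 else 0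

/-- Membership in `𝕍`: member of `𝕏` whose diagonal blocks have leading Toeplitz
coefficient equal to the identity. -/
def inVset (α m : Fin N → ℕ)
    (X : Matrix (Σ r : Fin N, Fin (α r) × Fin (m r)) (Σ r : Fin N, Fin (α r) × Fin (m r)) ℂ) :
    Prop :=
  inXset α m X ∧
    ∀ (r : Fin N) (i : Fin (α r)) (a b : Fin (m r)),
      X ⟨r, (i, a)⟩ ⟨r, (i, b)⟩ = if a = b then 1 else 0
section Aux

lemma sum_eq_single_c {ι : Type*} [Fintype ι] (f : ι → ℂ) (x₀ : ι)
    (h : ∀ x, x ≠ x₀ → f x = 0) : ∑ x, f x = f x₀ :=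
  Finset.sum_eq_single_of_mem x₀ (Finset.mem_univ _) (fun x _ hx => h x hx)

/-- shift matrix tensored with identity -/
def shiftK (b k : ℕ) : Matrix (Fin b × Fin k) (Fin b × Fin k) ℂ :=
  Matrix.of fun p q => if (p.1 : ℕ) + 1 = (q.1 : ℕ) ∧ p.2 = q.2 then 1 else 0

/-- identity on `Fin b` tensored with `Q` -/
def diagQ (b k : ℕ) (Q : Matrix (Fin k) (Fin k) ℂ) : Matrix (Fin b × Fin k) (Fin b × Fin k) ℂ :=
  Matrix.of fun p q => if p.1 = q.1 then Q p.2 q.2 else 0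

variable {b k : ℕ}

lemma revE_mul_apply (M : Matrix (Fin b × Fin k) (Fin b × Fin k) ℂ) (i : Fin b) (a : Fin k)
    (q : Fin b × Fin k) :
    (revE b k * M) (i, a) q = M (i.rev, a) q := by
  rw [Matrix.mul_apply, sum_eq_single_c _ (i.rev, a)]
  · have h1 : revE b k (i, a) (i.rev, a) = 1 := by
      have := i.isLt
      simp [revE, Fin.val_rev]
      omega
    rw [h1, one_mul]
  · rintro ⟨x1, x2⟩ hx
    have h0 : revE b k (i, a) (x1, x2) = 0 := by
      have := i.isLt
      simp only [revE, Matrix.of_apply, ite_eq_right_iff, and_imp]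
      intro h1 h2
      exfalso; apply hx
      subst h2
      have hx1 : x1 = i.rev := by
        ext; rw [Fin.val_rev]; omega
      rw [hx1]
    rw [h0, zero_mul]

lemma mul_revE_apply (M : Matrix (Fin b × Fin k) (Fin b × Fin k) ℂ) (p : Fin b × Fin k)
    (j : Fin b) (c : Fin k) :
    (M * revE b k) p (j, c) = M p (j.rev, c) := by
  rw [Matrix.mul_apply, sum_eq_single_c _ (j.rev, c)]
  · have h1 : revE b k (j.rev, c) (j, c) = 1 := by
      have := j.isLt
      simp [revE, Fin.val_rev]
      omega
    rw [h1, mul_one]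
  · rintro ⟨x1, x2⟩ hx
    have h0 : revE b k (x1, x2) (j, c) = 0 := by
      have := j.isLt
      have := x1.isLt
      simp only [revE, Matrix.of_apply, ite_eq_right_iff, and_imp]
      intro h1 h2
      exfalso; apply hx
      subst h2
      have hx1 : x1 = j.rev := by
        ext; rw [Fin.val_rev]; omega
      rw [hx1]
    rw [h0, mul_zero]

lemma revE_mul_revE : revE b k * revE b k = 1 := by
  ext ⟨i, a⟩ ⟨j, c⟩
  rw [revE_mul_apply]
  have hi := i.isLt
  have hj := j.isLt
  simp only [revE, Matrix.of_apply]
  by_cases h : i = j ∧ a = c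
  · obtain ⟨rfl, rfl⟩ := h
    rw [if_pos ⟨by rw [Fin.val_rev]; omega, rfl⟩, Matrix.one_apply_eq]
  · rw [if_neg, Matrix.one_apply_ne]
    · exact fun he => h ⟨congrArg Prod.fst he, congrArg Prod.snd he⟩
    · rintro ⟨h2, rfl⟩
      apply h
      refine ⟨?_, rfl⟩
      rw [Fin.val_rev] at h2
      ext; omega

lemma revE_transpose : (revE b k)ᵀ = revE b k := by
  ext ⟨i, a⟩ ⟨j, c⟩
  simp only [Matrix.transpose_apply, revE, Matrix.of_apply]
  by_cases h1 : (j : ℕ) + (i : ℕ) + 1 = b ∧ c = a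
  · rw [if_pos h1, if_pos ⟨by omega, h1.2.symm⟩]
  · rw [if_neg h1, if_neg]
    rintro ⟨h2, rfl⟩
    exact h1 ⟨by omega, rfl⟩

end Aux
section Aux2
variable {b k : ℕ}

lemma mul_shiftK_apply (M : Matrix (Fin b × Fin k) (Fin b × Fin k) ℂ) (p : Fin b × Fin k)
    (j : Fin b) (c : Fin k) :
    (M * shiftK b k) p (j, c) =
      if h : 1 ≤ (j : ℕ) then M p (⟨(j : ℕ) - 1, by have := j.isLt; omega⟩, c) else 0 := by
  have hj := j.isLt
  rw [Matrix.mul_apply]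
  by_cases h : 1 ≤ (j : ℕ)
  · rw [dif_pos h, sum_eq_single_c _ ((⟨(j : ℕ) - 1, by omega⟩ : Fin b), c)]
    · have h1 : shiftK b k (⟨(j : ℕ) - 1, by omega⟩, c) (j, c) = 1 := by
        simp only [shiftK, Matrix.of_apply]
        rw [if_pos]
        exact ⟨by omega, trivial⟩
      rw [h1, mul_one]
    · rintro ⟨x1, x2⟩ hx
      have h0 : shiftK b k (x1, x2) (j, c) = 0 := by
        simp only [shiftK, Matrix.of_apply, ite_eq_right_iff, and_imp]
        intro h1 h2
        exfalso; apply hx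
        subst h2
        have hx1 : x1 = (⟨(j : ℕ) - 1, by omega⟩ : Fin b) := by ext; simp; omega
        rw [hx1]
      rw [h0, mul_zero]
  · rw [dif_neg h]
    apply Finset.sum_eq_zero
    rintro ⟨x1, x2⟩ -
    have h0 : shiftK b k (x1, x2) (j, c) = 0 := by
      simp only [shiftK, Matrix.of_apply, ite_eq_right_iff, and_imp]
      intro h1 h2; omega
    rw [h0, mul_zero]

lemma shiftK_mul_apply (M : Matrix (Fin b × Fin k) (Fin b × Fin k) ℂ) (i : Fin b) (a : Fin k)
    (q : Fin b × Fin k) :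
    (shiftK b k * M) (i, a) q =
      if h : (i : ℕ) + 1 < b then M (⟨(i : ℕ) + 1, h⟩, a) q else 0 := by
  rw [Matrix.mul_apply]
  by_cases h : (i : ℕ) + 1 < b
  · rw [dif_pos h, sum_eq_single_c _ ((⟨(i : ℕ) + 1, h⟩ : Fin b), a)]
    · have h1 : shiftK b k (i, a) (⟨(i : ℕ) + 1, h⟩, a) = 1 := by
        simp only [shiftK, Matrix.of_apply]
        rw [if_pos]
        exact ⟨by simp, trivial⟩
      rw [h1, one_mul]
    · rintro ⟨x1, x2⟩ hx
      have h0 : shiftK b k (i, a) (x1, x2) = 0 := by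
        simp only [shiftK, Matrix.of_apply, ite_eq_right_iff, and_imp]
        intro h1 h2
        exfalso; apply hx
        subst h2
        have hx1 : x1 = (⟨(i : ℕ) + 1, h⟩ : Fin b) := by ext; simp; omega
        rw [hx1]
      rw [h0, zero_mul]
  · rw [dif_neg h]
    apply Finset.sum_eq_zero
    rintro ⟨x1, x2⟩ -
    have h0 : shiftK b k (i, a) (x1, x2) = 0 := by
      have := x1.isLt
      simp only [shiftK, Matrix.of_apply, ite_eq_right_iff, and_imp]
      intro h1 h2; omega
    rw [h0, zero_mul]

lemma diagQ_transpose (Q : Matrix (Fin k) (Fin k) ℂ) : (diagQ b k Q)ᵀ = diagQ b k Qᵀ := by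
  ext ⟨i, a⟩ ⟨j, c⟩
  simp only [Matrix.transpose_apply, diagQ, Matrix.of_apply]
  by_cases h : i = j
  · subst h; simp
  · rw [if_neg (fun he => h he.symm), if_neg h]

lemma diagQ_mul_diagQ (Q R : Matrix (Fin k) (Fin k) ℂ) :
    diagQ b k Q * diagQ b k R = diagQ b k (Q * R) := by
  ext ⟨i, a⟩ ⟨j, c⟩
  rw [Matrix.mul_apply, Fintype.sum_prod_type, sum_eq_single_c _ i]
  · by_cases h : i = j
    · subst h
      simp [diagQ, Matrix.mul_apply]
    · simp [diagQ, h]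
  · intro t ht
    apply Finset.sum_eq_zero
    intro u _
    simp [diagQ, Ne.symm ht]

lemma diagQ_one : diagQ b k (1 : Matrix (Fin k) (Fin k) ℂ) = 1 := by
  ext ⟨i, a⟩ ⟨j, c⟩
  by_cases h1 : i = j <;> by_cases h2 : a = c <;>
    simp [diagQ, Matrix.one_apply, Prod.ext_iff, h1, h2]

lemma diagQ_mul_revE_comm (Q : Matrix (Fin k) (Fin k) ℂ) :
    diagQ b k Q * revE b k = revE b k * diagQ b k Q := by
  ext ⟨i, a⟩ ⟨j, c⟩
  rw [mul_revE_apply, revE_mul_apply]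
  simp only [diagQ, Matrix.of_apply]
  have hiff : (i = j.rev) ↔ (i.rev = j) := by
    constructor
    · rintro rfl; simp [Fin.rev_rev]
    · rintro rfl; simp [Fin.rev_rev]
  by_cases h : i = j.rev
  · rw [if_pos h, if_pos (hiff.mp h)]
  · rw [if_neg h, if_neg (fun he => h (hiff.mpr he))]

lemma diagQ_mul_shiftK_comm (Q : Matrix (Fin k) (Fin k) ℂ) :
    diagQ b k Q * shiftK b k = shiftK b k * diagQ b k Q := by
  ext ⟨i, a⟩ ⟨j, c⟩
  rw [mul_shiftK_apply, shiftK_mul_apply]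
  have hi := i.isLt
  have hj := j.isLt
  by_cases h1 : 1 ≤ (j : ℕ)
  · rw [dif_pos h1]
    by_cases h2 : (i : ℕ) + 1 < b
    · rw [dif_pos h2]
      simp only [diagQ, Matrix.of_apply]
      by_cases h3 : (i : ℕ) + 1 = (j : ℕ)
      · rw [if_pos (by ext; simp; omega), if_pos (by ext; simp; omega)]
      · rw [if_neg (fun he => h3 (by have := congrArg Fin.val he; simp at this; omega)),
            if_neg (fun he => h3 (by have := congrArg Fin.val he; simp at this; omega))]
    · rw [dif_neg h2]
      simp only [diagQ, Matrix.of_apply]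
      rw [if_neg (fun he => h2 (by have := congrArg Fin.val he; simp at this; omega))]
  · rw [dif_neg h1]
    by_cases h2 : (i : ℕ) + 1 < b
    · rw [dif_pos h2]
      simp only [diagQ, Matrix.of_apply]
      rw [if_neg (fun he => h1 (by have := congrArg Fin.val he; simp at this; omega))]
    · rw [dif_neg h2]

end Aux2
section Aux3
variable {N : ℕ} {α m : Fin N → ℕ}

/-- the nilpotent Jordan matrix for the structure -/
def bigH (α m : Fin N → ℕ) :
    Matrix (Σ r : Fin N, Fin (α r) × Fin (m r)) (Σ r : Fin N, Fin (α r) × Fin (m r)) ℂ :=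
  Matrix.blockDiagonal' fun r => shiftK (α r) (m r)

lemma blockDiagonal'_mul_apply'
    (d : ∀ r : Fin N, Matrix (Fin (α r) × Fin (m r)) (Fin (α r) × Fin (m r)) ℂ)
    (M : Matrix (Σ r : Fin N, Fin (α r) × Fin (m r)) (Σ r : Fin N, Fin (α r) × Fin (m r)) ℂ)
    (r : Fin N) (p : Fin (α r) × Fin (m r)) (q : Σ r : Fin N, Fin (α r) × Fin (m r)) :
    (Matrix.blockDiagonal' d * M) ⟨r, p⟩ q = ∑ p', d r p p' * M ⟨r, p'⟩ q := by
  rw [Matrix.mul_apply, ← Finset.univ_sigma_univ, Finset.sum_sigma, sum_eq_single_c _ r]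
  · exact Finset.sum_congr rfl fun x _ => by rw [Matrix.blockDiagonal'_apply_eq]
  · intro t ht
    apply Finset.sum_eq_zero
    intro x _
    rw [Matrix.blockDiagonal'_apply_ne _ _ _ (Ne.symm ht), zero_mul]

lemma mul_blockDiagonal'_apply'
    (d : ∀ r : Fin N, Matrix (Fin (α r) × Fin (m r)) (Fin (α r) × Fin (m r)) ℂ)
    (M : Matrix (Σ r : Fin N, Fin (α r) × Fin (m r)) (Σ r : Fin N, Fin (α r) × Fin (m r)) ℂ)
    (p : Σ r : Fin N, Fin (α r) × Fin (m r)) (s : Fin N) (q : Fin (α s) × Fin (m s)) :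
    (M * Matrix.blockDiagonal' d) p ⟨s, q⟩ = ∑ p', M p ⟨s, p'⟩ * d s p' q := by
  rw [Matrix.mul_apply, ← Finset.univ_sigma_univ, Finset.sum_sigma, sum_eq_single_c _ s]
  · exact Finset.sum_congr rfl fun x _ => by rw [Matrix.blockDiagonal'_apply_eq]
  · intro t ht
    apply Finset.sum_eq_zero
    intro x _
    rw [Matrix.blockDiagonal'_apply_ne _ _ _ ht, mul_zero]

lemma mul_bigH_apply
    (X : Matrix (Σ r : Fin N, Fin (α r) × Fin (m r)) (Σ r : Fin N, Fin (α r) × Fin (m r)) ℂ)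
    (p : Σ r : Fin N, Fin (α r) × Fin (m r)) (s : Fin N) (j : Fin (α s)) (c : Fin (m s)) :
    (X * bigH α m) p ⟨s, (j, c)⟩ =
      if 1 ≤ (j : ℕ) then X p ⟨s, (⟨(j : ℕ) - 1, by have := j.isLt; omega⟩, c)⟩ else 0 := by
  rw [bigH, mul_blockDiagonal'_apply']
  have key := mul_shiftK_apply (Matrix.of fun _ q' => X p ⟨s, q'⟩) (j, c) j c
  rw [Matrix.mul_apply] at key
  simp only [Matrix.of_apply] at key
  rw [key]
  split_ifs with h <;> rfl

lemma bigH_mul_apply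
    (X : Matrix (Σ r : Fin N, Fin (α r) × Fin (m r)) (Σ r : Fin N, Fin (α r) × Fin (m r)) ℂ)
    (r : Fin N) (i : Fin (α r)) (a : Fin (m r)) (q : Σ r : Fin N, Fin (α r) × Fin (m r)) :
    (bigH α m * X) ⟨r, (i, a)⟩ q =
      if h : (i : ℕ) + 1 < α r then X ⟨r, (⟨(i : ℕ) + 1, h⟩, a)⟩ q else 0 := by
  rw [bigH, blockDiagonal'_mul_apply']
  have key := shiftK_mul_apply (Matrix.of fun p' (_ : Fin (α r) × Fin (m r)) => X ⟨r, p'⟩ q)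
    i a (i, a)
  rw [Matrix.mul_apply] at key
  simp only [Matrix.of_apply] at key
  rw [key]

lemma bigF_mul_apply
    (X : Matrix (Σ r : Fin N, Fin (α r) × Fin (m r)) (Σ r : Fin N, Fin (α r) × Fin (m r)) ℂ)
    (r : Fin N) (i : Fin (α r)) (a : Fin (m r)) (q : Σ r : Fin N, Fin (α r) × Fin (m r)) :
    (bigF α m * X) ⟨r, (i, a)⟩ q = X ⟨r, (i.rev, a)⟩ q := by
  rw [bigF, blockDiagonal'_mul_apply']
  have key := revE_mul_apply (Matrix.of fun p' (_ : Fin (α r) × Fin (m r)) => X ⟨r, p'⟩ q)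
    i a (i, a)
  rw [Matrix.mul_apply] at key
  simp only [Matrix.of_apply] at key
  rw [key]

lemma mul_bigF_apply
    (X : Matrix (Σ r : Fin N, Fin (α r) × Fin (m r)) (Σ r : Fin N, Fin (α r) × Fin (m r)) ℂ)
    (p : Σ r : Fin N, Fin (α r) × Fin (m r)) (s : Fin N) (j : Fin (α s)) (c : Fin (m s)) :
    (X * bigF α m) p ⟨s, (j, c)⟩ = X p ⟨s, (j.rev, c)⟩ := by
  rw [bigF, mul_blockDiagonal'_apply']
  have key := mul_revE_apply (Matrix.of fun _ q' => X p ⟨s, q'⟩) (j, c) j c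
  rw [Matrix.mul_apply] at key
  simp only [Matrix.of_apply] at key
  rw [key]

lemma bigF_mul_bigF : bigF α m * bigF α m = 1 := by
  rw [bigF, ← Matrix.blockDiagonal'_mul]
  have : (fun r => revE (α r) (m r) * revE (α r) (m r)) =
      fun r : Fin N => (1 : Matrix (Fin (α r) × Fin (m r)) (Fin (α r) × Fin (m r)) ℂ) :=
    funext fun r => revE_mul_revE
  rw [this]
  exact Matrix.blockDiagonal'_one

lemma bigF_transpose : (bigF α m)ᵀ = bigF α m := by
  rw [bigF, Matrix.blockDiagonal'_transpose]
  rw [show (fun k => (revE (α k) (m k))ᵀ) = fun k => revE (α k) (m k) from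
    funext fun r => revE_transpose]

end Aux3
section Aux4
variable {N : ℕ} {α m : Fin N → ℕ}

lemma isForm0T0_iff_commute
    (X : Matrix (Σ r : Fin N, Fin (α r) × Fin (m r)) (Σ r : Fin N, Fin (α r) × Fin (m r)) ℂ) :
    IsForm0T0 α m X ↔ X * bigH α m = bigH α m * X := by
  constructor
  · rintro ⟨A, hA⟩
    ext ⟨r, i, a⟩ ⟨s, j, c⟩
    rw [mul_bigH_apply, bigH_mul_apply]
    have hi := i.isLt
    have hj := j.isLt
    by_cases h1 : 1 ≤ (j : ℕ)
    · rw [if_pos h1, hA r s i ⟨(j : ℕ) - 1, by omega⟩ a c]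
      by_cases h2 : (i : ℕ) + 1 < α r
      · rw [dif_pos h2, hA r s ⟨(i : ℕ) + 1, h2⟩ j a c]
        simp only [Fin.val_mk]
        by_cases h3 : (i : ℕ) + (α s - min (α r) (α s)) ≤ (j : ℕ) - 1
        · rw [if_pos h3, if_pos (by omega)]
          have he : (j : ℕ) - 1 - (i : ℕ) - (α s - min (α r) (α s)) =
              (j : ℕ) - ((i : ℕ) + 1) - (α s - min (α r) (α s)) := by omega
          rw [he]
        · rw [if_neg h3, if_neg (by omega)]
      · rw [dif_neg h2, if_neg (by simp only [Fin.val_mk]; omega)]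
    · rw [if_neg h1]
      by_cases h2 : (i : ℕ) + 1 < α r
      · rw [dif_pos h2, hA r s ⟨(i : ℕ) + 1, h2⟩ j a c,
          if_neg (by simp only [Fin.val_mk]; omega)]
      · rw [dif_neg h2]
  · intro hC
    have R : ∀ (r s : Fin N) (i' j' : ℕ) (hi' : i' < α r) (hj' : j' < α s)
        (a : Fin (m r)) (c : Fin (m s)),
        (if 1 ≤ j' then X ⟨r, (⟨i', hi'⟩, a)⟩ ⟨s, (⟨j' - 1, by omega⟩, c)⟩ else 0) =
        (if h : i' + 1 < α r then X ⟨r, (⟨i' + 1, h⟩, a)⟩ ⟨s, (⟨j', hj'⟩, c)⟩ else 0) := by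
      intro r s i' j' hi' hj' a c
      have h1 := congrFun (congrFun hC ⟨r, (⟨i', hi'⟩, a)⟩) ⟨s, (⟨j', hj'⟩, c)⟩
      rw [mul_bigH_apply, bigH_mul_apply] at h1
      exact h1
    refine ⟨fun r s k => Matrix.of fun a c =>
      if h : k + (α s - min (α r) (α s)) < α s ∧ 0 < α r then
        X ⟨r, (⟨0, h.2⟩, a)⟩ ⟨s, (⟨k + (α s - min (α r) (α s)), h.1⟩, c)⟩ else 0, ?_⟩
    intro r s i j a c
    have hi := i.isLt
    have hj := j.isLt
    have XC : ∀ (i1 i2 : ℕ) (h1 : i1 < α r) (h2 : i2 < α r) (j1 j2 : ℕ)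
        (g1 : j1 < α s) (g2 : j2 < α s), i1 = i2 → j1 = j2 →
        X ⟨r, (⟨i1, h1⟩, a)⟩ ⟨s, (⟨j1, g1⟩, c)⟩ = X ⟨r, (⟨i2, h2⟩, a)⟩ ⟨s, (⟨j2, g2⟩, c)⟩ := by
      rintro i1 i2 h1 h2 j1 j2 g1 g2 rfl rfl; rfl
    have step : ∀ (i' j' : ℕ) (hi' : i' + 1 < α r) (hj' : j' < α s) (hj1 : 1 ≤ j'),
        X ⟨r, (⟨i', by omega⟩, a)⟩ ⟨s, (⟨j' - 1, by omega⟩, c)⟩ =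
        X ⟨r, (⟨i' + 1, hi'⟩, a)⟩ ⟨s, (⟨j', hj'⟩, c)⟩ := by
      intro i' j' hi' hj' hj1
      have h1 := R r s i' j' (by omega) hj' a c
      rw [if_pos hj1, dif_pos hi'] at h1
      exact h1
    have lastrow : ∀ (j' : ℕ) (hj' : j' < α s) (hj1 : 1 ≤ j') (hr : 0 < α r),
        X ⟨r, (⟨α r - 1, by omega⟩, a)⟩ ⟨s, (⟨j' - 1, by omega⟩, c)⟩ = 0 := by
      intro j' hj' hj1 hr
      have h1 := R r s (α r - 1) j' (by omega) hj' a c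
      rw [if_pos hj1, dif_neg (by omega)] at h1
      exact h1
    have firstcol : ∀ (i' : ℕ) (hi' : i' + 1 < α r) (h0 : 0 < α s),
        X ⟨r, (⟨i' + 1, hi'⟩, a)⟩ ⟨s, (⟨0, h0⟩, c)⟩ = 0 := by
      intro i' hi' h0
      have h1 := R r s i' 0 (by omega) h0 a c
      rw [if_neg (by omega), dif_pos hi'] at h1
      exact h1.symm
    have fwd : ∀ (t i' j' : ℕ) (h1 : i' + t < α r) (h2 : j' + t < α s),
        X ⟨r, (⟨i', by omega⟩, a)⟩ ⟨s, (⟨j', by omega⟩, c)⟩ =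
        X ⟨r, (⟨i' + t, h1⟩, a)⟩ ⟨s, (⟨j' + t, h2⟩, c)⟩ := by
      intro t
      induction t with
      | zero => intro i' j' h1 h2; rfl
      | succ t ih =>
        intro i' j' h1 h2
        have e1 := ih i' j' (by omega) (by omega)
        have e2 := step (i' + t) (j' + t + 1) (by omega) (by omega) (by omega)
        exact e1.trans e2
    have toep : ∀ (i' j' : ℕ) (h1 : i' < α r) (h2 : j' < α s) (h3 : i' ≤ j'),
        X ⟨r, (⟨i', h1⟩, a)⟩ ⟨s, (⟨j', h2⟩, c)⟩ =
        X ⟨r, (⟨0, by omega⟩, a)⟩ ⟨s, (⟨j' - i', by omega⟩, c)⟩ := by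
      intro i'
      induction i' with
      | zero => intro j' h1 h2 h3; exact XC _ _ _ _ _ _ _ _ rfl (by omega)
      | succ i' ih =>
        intro j' h1 h2 h3
        have e2 := step i' j' (by omega) h2 (by omega)
        have e1 := ih (j' - 1) (by omega) (by omega) (by omega)
        refine (e2.symm.trans (e1.trans ?_))
        exact XC _ _ (by omega) (by omega) _ _ (by omega) (by omega) rfl (by omega)
    have zer : ∀ (j' i' : ℕ) (h1 : i' < α r) (h2 : j' < α s),
        j' < i' + (α s - min (α r) (α s)) →
        X ⟨r, (⟨i', h1⟩, a)⟩ ⟨s, (⟨j', h2⟩, c)⟩ = 0 := by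
      intro j'
      induction j' with
      | zero =>
        intro i' h1 h2 hlt
        rcases Nat.eq_zero_or_pos i' with rfl | hpos
        · have hrs : α r < α s := by omega
          have e1 := fwd (α r - 1) 0 0 (by omega) (by omega)
          have e2 := lastrow (α r) (by omega) (by omega) (by omega)
          exact e1.trans ((XC _ _ (by omega) (by omega) _ _ (by omega) (by omega)
            (by omega) (by omega)).trans e2)
        · have e := firstcol (i' - 1) (by omega) (by omega)
          exact (XC _ _ h1 (by omega) _ _ h2 (by omega) (by omega) rfl).trans e
      | succ j' ihj =>
        intro i' h1 h2 hlt
        rcases Nat.eq_zero_or_pos i' with rfl | hpos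
        · have hrs : α r < α s := by omega
          have e1 := fwd (α r - 1) 0 (j' + 1) (by omega) (by omega)
          have e2 := lastrow (j' + 1 + α r) (by omega) (by omega) (by omega)
          exact e1.trans ((XC _ _ (by omega) (by omega) _ _ (by omega) (by omega)
            (by omega) (by omega)).trans e2)
        · have e2 := step (i' - 1) (j' + 1) (by omega) h2 (by omega)
          have e3 := ihj (i' - 1) (by omega) (by omega) (by omega)
          exact (XC _ _ h1 (by omega) _ _ h2 h2 (by omega) rfl).trans (e2.symm.trans e3)
    by_cases hcond : (i : ℕ) + (α s - min (α r) (α s)) ≤ (j : ℕ)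
    · rw [if_pos hcond]
      simp only [Matrix.of_apply]
      have hok : ((j : ℕ) - (i : ℕ) - (α s - min (α r) (α s))) + (α s - min (α r) (α s)) < α s
          ∧ 0 < α r := ⟨by omega, by omega⟩
      rw [dif_pos hok]
      have e1 := toep (i : ℕ) (j : ℕ) hi hj (by omega)
      exact e1.trans (XC _ _ (by omega) (by omega) _ _ (by omega) (by omega) rfl (by omega))
    · rw [if_neg hcond]
      exact zer (j : ℕ) (i : ℕ) hi hj (by omega)

end Aux4
section Aux5
variable {N : ℕ} {α m : Fin N → ℕ}

lemma bigF_mul_bigF_mul (Z : Matrix (Σ r : Fin N, Fin (α r) × Fin (m r))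
    (Σ r : Fin N, Fin (α r) × Fin (m r)) ℂ) :
    bigF α m * (bigF α m * Z) = Z := by
  rw [← Matrix.mul_assoc, bigF_mul_bigF, one_mul]

lemma theta_antihom (X Y : Matrix (Σ r : Fin N, Fin (α r) × Fin (m r))
    (Σ r : Fin N, Fin (α r) × Fin (m r)) ℂ) :
    bigF α m * (X * Y)ᵀ * bigF α m =
      (bigF α m * Yᵀ * bigF α m) * (bigF α m * Xᵀ * bigF α m) := by
  rw [Matrix.transpose_mul]
  simp only [Matrix.mul_assoc, bigF_mul_bigF_mul]

lemma inXset_unit_det {X} (hX : inXset α m X) : IsUnit X.det :=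
  (Matrix.isUnit_iff_isUnit_det X).mp hX.1

lemma inXset_inv_eq {X} (hX : inXset α m X) : X⁻¹ = bigF α m * Xᵀ * bigF α m :=
  Matrix.inv_eq_left_inv hX.2.2

lemma inXset_one : inXset α m 1 := by
  refine ⟨isUnit_one, (isForm0T0_iff_commute _).mpr (by rw [one_mul, mul_one]), ?_⟩
  rw [Matrix.transpose_one, Matrix.mul_one, Matrix.mul_one, bigF_mul_bigF]

lemma inXset_mul {X Y} (hX : inXset α m X) (hY : inXset α m Y) : inXset α m (X * Y) := by
  have hx := (isForm0T0_iff_commute X).mp hX.2.1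
  have hy := (isForm0T0_iff_commute Y).mp hY.2.1
  refine ⟨hX.1.mul hY.1, (isForm0T0_iff_commute _).mpr ?_, ?_⟩
  · rw [Matrix.mul_assoc, hy, ← Matrix.mul_assoc, hx, Matrix.mul_assoc]
  · rw [theta_antihom]
    calc (bigF α m * Yᵀ * bigF α m) * (bigF α m * Xᵀ * bigF α m) * (X * Y)
        = (bigF α m * Yᵀ * bigF α m) * ((bigF α m * Xᵀ * bigF α m * X) * Y) := by
          simp only [Matrix.mul_assoc]
      _ = 1 := by rw [hX.2.2, one_mul]; exact hY.2.2

lemma inXset_inv {X} (hX : inXset α m X) : inXset α m X⁻¹ := by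
  have hdet := inXset_unit_det hX
  have hx := (isForm0T0_iff_commute X).mp hX.2.1
  refine ⟨Matrix.isUnit_nonsing_inv_iff.mpr hX.1, (isForm0T0_iff_commute _).mpr ?_, ?_⟩
  · have e1 : X⁻¹ * (X * bigH α m) * X⁻¹ = bigH α m * X⁻¹ := by
      rw [← Matrix.mul_assoc X⁻¹ X, Matrix.nonsing_inv_mul _ hdet, one_mul]
    have e2 : X⁻¹ * (bigH α m * X) * X⁻¹ = X⁻¹ * bigH α m := by
      rw [Matrix.mul_assoc X⁻¹ (bigH α m * X), Matrix.mul_assoc,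
        Matrix.mul_nonsing_inv _ hdet, Matrix.mul_one]
    rw [← e2, ← hx, e1]
  · rw [inXset_inv_eq hX, Matrix.transpose_mul, Matrix.transpose_mul,
      Matrix.transpose_transpose, bigF_transpose]
    have h1 := mul_eq_one_comm.mpr hX.2.2
    simp only [Matrix.mul_assoc] at h1 ⊢
    simp only [bigF_mul_bigF_mul]
    exact h1

lemma diagLead_one (r : Fin N) (i : Fin (α r)) :
    diagLead α m (1 : Matrix (Σ r : Fin N, Fin (α r) × Fin (m r))
      (Σ r : Fin N, Fin (α r) × Fin (m r)) ℂ) r i = 1 := by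
  ext a b
  by_cases h : a = b <;> simp [diagLead, Matrix.one_apply, h]

lemma diagLead_mul (hinj : Function.Injective α) {X Y}
    (hX : IsForm0T0 α m X) (hY : IsForm0T0 α m Y) (r : Fin N) (i : Fin (α r)) :
    diagLead α m (X * Y) r i = diagLead α m X r i * diagLead α m Y r i := by
  obtain ⟨A, hA⟩ := hX
  obtain ⟨B, hB⟩ := hY
  ext a b
  simp only [diagLead, Matrix.of_apply, Matrix.mul_apply]
  rw [← Finset.univ_sigma_univ, Finset.sum_sigma, sum_eq_single_c _ r]
  · rw [Fintype.sum_prod_type, sum_eq_single_c _ i]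
    intro t ht
    apply Finset.sum_eq_zero
    intro u _
    rw [hA r r i t a u, hB r r t i u b]
    by_cases h1 : (i : ℕ) + (α r - min (α r) (α r)) ≤ (t : ℕ)
    · rw [if_pos h1, if_neg, mul_zero]
      intro h2
      exact ht (Fin.ext (by omega))
    · rw [if_neg h1, zero_mul]
  · intro s hs
    apply Finset.sum_eq_zero
    rintro ⟨t, u⟩ -
    rw [hA r s i t a u, hB s r t i u b]
    by_cases h1 : (i : ℕ) + (α s - min (α r) (α s)) ≤ (t : ℕ)
    · rw [if_pos h1, if_neg, mul_zero]
      intro h2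
      have hi := i.isLt
      have ht := t.isLt
      have hrs : α r = α s := by omega
      exact hs (hinj hrs).symm
    · rw [if_neg h1, zero_mul]

lemma diagLead_const {X} (hX : IsForm0T0 α m X) (r : Fin N) (i i' : Fin (α r)) :
    diagLead α m X r i = diagLead α m X r i' := by
  obtain ⟨A, hA⟩ := hX
  ext a b
  simp only [diagLead, Matrix.of_apply]
  rw [hA r r i i a b, hA r r i' i' a b, if_pos (by omega), if_pos (by omega)]
  rw [show (i : ℕ) - (i : ℕ) - (α r - min (α r) (α r)) =
    (i' : ℕ) - (i' : ℕ) - (α r - min (α r) (α r)) from by omega]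

lemma diagLead_inv {X} (hX : inXset α m X) (r : Fin N) (i : Fin (α r)) :
    diagLead α m X⁻¹ r i = (diagLead α m X r i)ᵀ := by
  ext a b
  simp only [diagLead, Matrix.of_apply, Matrix.transpose_apply]
  rw [inXset_inv_eq hX, mul_bigF_apply, bigF_mul_apply, Matrix.transpose_apply]
  have h2 := congrFun (congrFun (diagLead_const hX.2.1 r i.rev i) b) a
  simpa [diagLead] using h2

lemma diagLead_orth (hinj : Function.Injective α) {X} (hX : inXset α m X)
    (r : Fin N) (i : Fin (α r)) :
    (diagLead α m X r i)ᵀ * diagLead α m X r i = 1 := by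
  have h1 := diagLead_mul hinj (inXset_inv hX).2.1 hX.2.1 r i
  rw [Matrix.nonsing_inv_mul _ (inXset_unit_det hX), diagLead_one,
    diagLead_inv hX] at h1
  exact h1.symm

/-- the block-scalar matrices -/
def Omat (α m : Fin N → ℕ) (Q : ∀ r, Matrix (Fin (m r)) (Fin (m r)) ℂ) :
    Matrix (Σ r : Fin N, Fin (α r) × Fin (m r)) (Σ r : Fin N, Fin (α r) × Fin (m r)) ℂ :=
  Matrix.blockDiagonal' fun r => diagQ (α r) (m r) (Q r)

lemma inOset_iff {X} : inOset α m X ↔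
    ∃ Q : ∀ r, Matrix (Fin (m r)) (Fin (m r)) ℂ,
      (∀ r, (Q r)ᵀ * Q r = 1) ∧ X = Omat α m Q := Iff.rfl

lemma Omat_mul (Q R : ∀ r, Matrix (Fin (m r)) (Fin (m r)) ℂ) :
    Omat α m Q * Omat α m R = Omat α m (fun r => Q r * R r) := by
  unfold Omat
  rw [← Matrix.blockDiagonal'_mul]
  exact congrArg Matrix.blockDiagonal' (funext fun r => diagQ_mul_diagQ _ _)

lemma Omat_one : Omat α m (fun _ => 1) = 1 := by
  unfold Omat
  rw [show (fun r : Fin N => diagQ (α r) (m r) 1) =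
    fun r : Fin N => (1 : Matrix (Fin (α r) × Fin (m r)) (Fin (α r) × Fin (m r)) ℂ) from
    funext fun r => diagQ_one]
  exact Matrix.blockDiagonal'_one

lemma Omat_transpose (Q : ∀ r, Matrix (Fin (m r)) (Fin (m r)) ℂ) :
    (Omat α m Q)ᵀ = Omat α m (fun r => (Q r)ᵀ) := by
  unfold Omat
  rw [Matrix.blockDiagonal'_transpose]
  exact congrArg Matrix.blockDiagonal' (funext fun r => diagQ_transpose _)

lemma Omat_bigF_comm (Q : ∀ r, Matrix (Fin (m r)) (Fin (m r)) ℂ) :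
    Omat α m Q * bigF α m = bigF α m * Omat α m Q := by
  unfold Omat bigF
  rw [← Matrix.blockDiagonal'_mul, ← Matrix.blockDiagonal'_mul]
  exact congrArg Matrix.blockDiagonal' (funext fun r => diagQ_mul_revE_comm _)

lemma Omat_bigH_comm (Q : ∀ r, Matrix (Fin (m r)) (Fin (m r)) ℂ) :
    Omat α m Q * bigH α m = bigH α m * Omat α m Q := by
  unfold Omat bigH
  rw [← Matrix.blockDiagonal'_mul, ← Matrix.blockDiagonal'_mul]
  exact congrArg Matrix.blockDiagonal' (funext fun r => diagQ_mul_shiftK_comm _)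

lemma Omat_diagLead (Q : ∀ r, Matrix (Fin (m r)) (Fin (m r)) ℂ) (r : Fin N) (i : Fin (α r)) :
    diagLead α m (Omat α m Q) r i = Q r := by
  ext a b
  simp only [diagLead, Matrix.of_apply, Omat, Matrix.blockDiagonal'_apply_eq]
  simp [diagQ]

lemma Omat_inXset {Q : ∀ r, Matrix (Fin (m r)) (Fin (m r)) ℂ}
    (hQ : ∀ r, (Q r)ᵀ * Q r = 1) : inXset α m (Omat α m Q) := by
  have hone : Omat α m Q * Omat α m (fun r => (Q r)ᵀ) = 1 := by
    rw [Omat_mul, show (fun r => Q r * (Q r)ᵀ) =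
      (fun _ : Fin N => (1 : Matrix (Fin (m _)) (Fin (m _)) ℂ)) from
      funext fun r => mul_eq_one_comm.mp (hQ r)]
    exact Omat_one
  refine ⟨IsUnit.of_mul_eq_one _ hone,
    (isForm0T0_iff_commute _).mpr (Omat_bigH_comm Q), ?_⟩
  rw [Omat_transpose,
    show bigF α m * Omat α m (fun r => (Q r)ᵀ) = Omat α m (fun r => (Q r)ᵀ) * bigF α m from
      (Omat_bigF_comm _).symm,
    Matrix.mul_assoc (Omat α m fun r => (Q r)ᵀ), bigF_mul_bigF, Matrix.mul_one, Omat_mul,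
    show (fun r => (Q r)ᵀ * Q r) =
      (fun _ : Fin N => (1 : Matrix (Fin (m _)) (Fin (m _)) ℂ)) from funext hQ]
  exact Omat_one

end Aux5

/-- `𝕆` and `𝕍` are subgroups of `𝕏`, `𝕍` is normal in `𝕏`,
`𝕆 ∩ 𝕍 = {1}`, and every `X ∈ 𝕏` factors uniquely as `X = Q·V` with `Q ∈ 𝕆`, `V ∈ 𝕍`;
hence `𝕏` is the semidirect product `𝕆 ⋉ 𝕍`. -/
theorem stmt3 (N : ℕ) (α m : Fin N → ℕ)
    (hαa : StrictAnti α) (hα1 : ∀ r, 0 < α r) (hm : ∀ r, 0 < m r) :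
    -- (i) 𝕆 and 𝕍 are subgroups of 𝕏
    ((∀ X, inOset α m X → inXset α m X) ∧ inOset α m 1 ∧
      (∀ X Y, inOset α m X → inOset α m Y → inOset α m (X * Y)) ∧
      (∀ X, inOset α m X → inOset α m X⁻¹)) ∧
    (inVset α m 1 ∧
      (∀ X Y, inVset α m X → inVset α m Y → inVset α m (X * Y)) ∧
      (∀ X, inVset α m X → inVset α m X⁻¹)) ∧
    -- (ii) 𝕍 is normal in 𝕏
    (∀ X V, inXset α m X → inVset α m V → inVset α m (X⁻¹ * V * X)) ∧
    -- (iii) 𝕆 ∩ 𝕍 = {1}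
    (∀ X, inOset α m X → inVset α m X → X = 1) ∧
    -- (iv) unique factorization X = Q·V
    (∀ X, inXset α m X → ∃ Q V, inOset α m Q ∧ inVset α m V ∧ X = Q * V ∧
      ∀ Q' V', inOset α m Q' → inVset α m V' → X = Q' * V' → Q' = Q ∧ V' = V) := by
  have hinj : Function.Injective α := hαa.injective
  have hVlead : ∀ X, inVset α m X → ∀ (r : Fin N) (i : Fin (α r)),
      diagLead α m X r i = 1 := by
    intro X hX r i
    ext a b
    simp only [diagLead, Matrix.of_apply]
    rw [hX.2 r i a b]
    exact (Matrix.one_apply).symm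
  have hleadV : ∀ X, (∀ (r : Fin N) (i : Fin (α r)), diagLead α m X r i = 1) →
      ∀ (r : Fin N) (i : Fin (α r)) (a b : Fin (m r)),
        X ⟨r, (i, a)⟩ ⟨r, (i, b)⟩ = if a = b then 1 else 0 := by
    intro X h r i a b
    have h2 := congrFun (congrFun (h r i) a) b
    simpa [diagLead, Matrix.one_apply] using h2
  have hOne : ∀ (Q : ∀ r, Matrix (Fin (m r)) (Fin (m r)) ℂ), (∀ r, (Q r)ᵀ * Q r = 1) →
      Omat α m Q * Omat α m (fun r => (Q r)ᵀ) = 1 := by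
    intro Q hQ
    rw [Omat_mul, show (fun r => Q r * (Q r)ᵀ) =
      (fun _ : Fin N => (1 : Matrix (Fin (m _)) (Fin (m _)) ℂ)) from
      funext fun r => mul_eq_one_comm.mp (hQ r)]
    exact Omat_one
  refine ⟨⟨?_, ?_, ?_, ?_⟩, ⟨?_, ?_, ?_⟩, ?_, ?_, ?_⟩
  · -- 𝕆 ⊆ 𝕏
    rintro X ⟨Q, hQ, rfl⟩
    exact Omat_inXset hQ
  · -- 1 ∈ 𝕆
    exact ⟨fun _ => 1, fun r => by rw [Matrix.transpose_one, one_mul], Omat_one.symm⟩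
  · -- 𝕆 closed under *
    rintro X Y ⟨Q, hQ, rfl⟩ ⟨R, hR, rfl⟩
    refine ⟨fun r => Q r * R r, fun r => ?_, ?_⟩
    · rw [Matrix.transpose_mul, Matrix.mul_assoc, ← Matrix.mul_assoc (Q r)ᵀ, hQ r, one_mul,
        hR r]
    · show Omat α m Q * Omat α m R = Omat α m fun r => Q r * R r
      exact Omat_mul Q R
  · -- 𝕆 closed under ⁻¹
    rintro X ⟨Q, hQ, rfl⟩
    exact ⟨fun r => (Q r)ᵀ,
      fun r => by rw [Matrix.transpose_transpose]; exact mul_eq_one_comm.mp (hQ r),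
      Matrix.inv_eq_right_inv (hOne Q hQ)⟩
  · -- 1 ∈ 𝕍
    exact ⟨inXset_one, hleadV 1 (fun r i => diagLead_one r i)⟩
  · -- 𝕍 closed under *
    intro X Y hX hY
    refine ⟨inXset_mul hX.1 hY.1, hleadV _ ?_⟩
    intro r i
    rw [diagLead_mul hinj hX.1.2.1 hY.1.2.1, hVlead X hX, hVlead Y hY, one_mul]
  · -- 𝕍 closed under ⁻¹
    intro X hX
    refine ⟨inXset_inv hX.1, hleadV _ ?_⟩
    intro r i
    rw [diagLead_inv hX.1, hVlead X hX, Matrix.transpose_one]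
  · -- 𝕍 normal
    intro X V hX hV
    refine ⟨inXset_mul (inXset_mul (inXset_inv hX) hV.1) hX, hleadV _ ?_⟩
    intro r i
    rw [diagLead_mul hinj (inXset_mul (inXset_inv hX) hV.1).2.1 hX.2.1,
      diagLead_mul hinj (inXset_inv hX).2.1 hV.1.2.1, hVlead V hV, mul_one,
      diagLead_inv hX]
    exact diagLead_orth hinj hX r i
  · -- 𝕆 ∩ 𝕍 = 1
    rintro X ⟨Q, hQ, rfl⟩ hV
    have hQ1 : ∀ r, Q r = 1 := by
      intro r
      have h1 : diagLead α m (Omat α m Q) r ⟨0, hα1 r⟩ = 1 := hVlead _ hV r ⟨0, hα1 r⟩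
      rwa [Omat_diagLead] at h1
    have h2 : Omat α m Q = 1 := by
      rw [show Q = fun _ => 1 from funext hQ1]
      exact Omat_one
    exact h2
  · -- factorization
    intro X hX
    set Q0 : ∀ r, Matrix (Fin (m r)) (Fin (m r)) ℂ :=
      fun r => diagLead α m X r ⟨0, hα1 r⟩ with hQ0
    have hQorth : ∀ r, (Q0 r)ᵀ * Q0 r = 1 := fun r => diagLead_orth hinj hX r _
    have hQin : inOset α m (Omat α m Q0) := ⟨Q0, hQorth, rfl⟩
    have hQX : inXset α m (Omat α m Q0) := Omat_inXset hQorth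
    have hQdet := inXset_unit_det hQX
    set V0 := (Omat α m Q0)⁻¹ * X with hV0
    have hV0X : inXset α m V0 := inXset_mul (inXset_inv hQX) hX
    have hV0lead : ∀ (r : Fin N) (i : Fin (α r)), diagLead α m V0 r i = 1 := by
      intro r i
      rw [hV0, diagLead_mul hinj (inXset_inv hQX).2.1 hX.2.1, diagLead_inv hQX,
        Omat_diagLead,
        show diagLead α m X r i = Q0 r from diagLead_const hX.2.1 r i ⟨0, hα1 r⟩]
      exact hQorth r
    have hVin : inVset α m V0 := ⟨hV0X, hleadV _ hV0lead⟩
    refine ⟨Omat α m Q0, V0, hQin, hVin, ?_, ?_⟩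
    · rw [hV0, ← Matrix.mul_assoc, Matrix.mul_nonsing_inv _ hQdet, one_mul]
    · rintro Q' V' hQ' hV' hXeq
      obtain ⟨R, hR, hQeq⟩ := hQ'
      have hQ'eq : Q' = Omat α m R := hQeq
      rw [hQ'eq] at hXeq
      have hR_eq : R = Q0 := by
        funext r
        have h1 := congrArg (fun M => diagLead α m M r ⟨0, hα1 r⟩) hXeq
        beta_reduce at h1
        rw [diagLead_mul hinj (Omat_inXset hR).2.1 hV'.1.2.1, Omat_diagLead,
          hVlead V' hV', mul_one] at h1
        exact h1.symm
      constructor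
      · rw [hQ'eq, hR_eq]
      · rw [hV0, hXeq, hR_eq, ← Matrix.mul_assoc, Matrix.nonsing_inv_mul _ hQdet, one_mul]
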